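/- arXiv:2305.00935 — 5 statements merged into one kernel-verified Lean document; each statement's English description precedes it below -/
import Mathlib

section
/- Let T be a tree (a set of finite sequences of natural numbers closed under initial segments) that has no infinite branch (i.e., there is no f : ℕ → ℕ such that every initial segment of f lies in T). Then every infinite subset S of T contains an infinite antichain with respect to the prefix order. -/
/-- If a tree on ℕ has no infinite branch, then every infinite subset of it
contains an infinite antichain for the prefix order. -/
theorem stmt1 (T : Set (List ℕ))
    (hT : ∀ σ ∈ T, ∀ τ : List ℕ, τ <+: σ → τ ∈ T)
    (hWF : ¬ ∃ f : ℕ → ℕ, ∀ n : ℕ, (List.range n).map f ∈ T)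
    (S : Set (List ℕ)) (hST : S ⊆ T) (hS : S.Infinite) :
    ∃ A : Set (List ℕ), A ⊆ S ∧ A.Infinite ∧
      ∀ σ ∈ A, ∀ τ ∈ A, σ ≠ τ → ¬ σ <+: τ ∧ ¬ τ <+: σ := by
  classical
  -- No infinite strictly increasing chain in T
  have nochain : ∀ g : ℕ → List ℕ, (∀ n, g n ∈ T) →
      (∀ n, g n <+: g (n+1) ∧ g n ≠ g (n+1)) → False := by
    intro g hgT hg
    have hmono : ∀ m k, m ≤ k → g m <+: g k := by
      intro m k h
      induction h with
      | refl => exact List.prefix_refl _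
      | step h ih => exact ih.trans (hg _).1
    have hlen : ∀ n, n ≤ (g n).length := by
      intro n
      induction n with
      | zero => simp
      | succ n ih =>
        have h1 : (g n).length < (g (n+1)).length := by
          rcases hg n with ⟨hp, hne⟩
          exact lt_of_le_of_ne hp.length_le (fun h => hne (hp.eq_of_length h))
        omega
    set f : ℕ → ℕ := fun n => (g (n+1)).getD n 0 with hf
    have key : ∀ n, (List.range n).map f = (g n).take n := by
      intro n
      apply List.ext_getElem
      · simp [Nat.min_eq_left (hlen n)]
      · intro i h1 h2
        simp only [List.getElem_map, List.getElem_range, List.getElem_take]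
        have hi : i < n := by simpa using h1
        have hiln : i < (g (i+1)).length := lt_of_lt_of_le (Nat.lt_succ_self i) (hlen (i+1))
        have hpre := hmono (i+1) n hi
        rw [hf]
        simp only [List.getD_eq_getElem _ _ hiln]
        exact hpre.getElem hiln
    apply hWF
    refine ⟨f, fun n => ?_⟩
    rw [key n]
    exact hT (g n) (hgT n) _ (List.take_prefix n (g n))
  -- maximal elements of S
  set M : Set (List ℕ) := {σ | σ ∈ S ∧ ∀ τ ∈ S, σ <+: τ → σ = τ} with hM
  have hmax : ∀ σ ∈ S, ∃ m ∈ M, σ <+: m := by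
    intro σ hσ
    by_contra hcon
    push_neg at hcon
    have step : ∀ τ : {l // l ∈ S ∧ σ <+: l},
        ∃ ρ : {l // l ∈ S ∧ σ <+: l}, τ.1 <+: ρ.1 ∧ τ.1 ≠ ρ.1 := by
      rintro ⟨τ, hτS, hστ⟩
      have hτM : τ ∉ M := fun h => hcon τ h hστ
      rw [hM] at hτM
      simp only [Set.mem_setOf_eq, not_and, not_forall] at hτM
      rcases hτM hτS with ⟨ρ, hρS, hpre, hne⟩
      exact ⟨⟨ρ, hρS, hστ.trans hpre⟩, hpre, hne⟩
    choose next hnext using step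
    set g : ℕ → {l // l ∈ S ∧ σ <+: l} :=
      fun n => next^[n] ⟨σ, hσ, List.prefix_refl σ⟩ with hg
    have hgs : ∀ n, g (n+1) = next (g n) := by
      intro n
      rw [hg]
      exact Function.iterate_succ_apply' next n _
    apply nochain (fun n => (g n).1)
    · intro n; exact hST (g n).2.1
    · intro n
      rw [hgs n]
      exact hnext (g n)
  have hMS : M ⊆ S := fun σ hσ => hσ.1
  have hMinf : M.Infinite := by
    intro hfin
    apply hS
    have hsub : S ⊆ ⋃ m ∈ M, {τ | τ <+: m} := by
      intro σ hσ
      rcases hmax σ hσ with ⟨m, hm, hpre⟩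
      exact Set.mem_biUnion hm hpre
    refine Set.Finite.subset (Set.Finite.biUnion hfin (fun m _ => ?_)) hsub
    exact (m.inits.finite_toSet).subset (fun τ hτ => by simpa [List.mem_inits] using hτ)
  refine ⟨M, hMS, hMinf, ?_⟩
  intro σ hσ τ hτ hne
  exact ⟨fun h => hne (hσ.2 τ hτ.1 h), fun h => hne.symm (hτ.2 σ hσ.1 h)⟩
end

section
/- Let T be a tree over ℕ and let H be a simple graph whose vertex set is contained in T, such that every edge of H joins two prefix-comparable sequences. If H contains a one-way infinite ray as a subgraph (i.e., there are pairwise distinct vertices σ_0, σ_1, σ_2, … with σ_i adjacent to σ_{i+1} for all i), then T has an infinite branch. -/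
/-- If a graph with vertices in a tree `T` has only edges between prefix-comparable
sequences and contains a one-way infinite ray, then `T` has an infinite branch. -/
theorem stmt4 (T : Set (List ℕ))
    (hT : ∀ σ ∈ T, ∀ τ : List ℕ, τ <+: σ → τ ∈ T)
    (H : SimpleGraph (List ℕ))
    (hedge : ∀ σ τ : List ℕ, H.Adj σ τ → σ ∈ T ∧ τ ∈ T ∧ (σ <+: τ ∨ τ <+: σ))
    (σ : ℕ → List ℕ) (hinj : Function.Injective σ)
    (hray : ∀ i : ℕ, H.Adj (σ i) (σ (i + 1))) :
    ∃ f : ℕ → ℕ, ∀ n : ℕ, (List.range n).map f ∈ T := by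
  have hcomp : ∀ i, σ i <+: σ (i+1) ∨ σ (i+1) <+: σ i :=
    fun i => (hedge _ _ (hray i)).2.2
  have hmem : ∀ i, σ i ∈ T := fun i => (hedge _ _ (hray i)).1
  -- take-k equality for comparable lists of length ≥ k
  have htake : ∀ (k : ℕ) (a b : List ℕ), (a <+: b ∨ b <+: a) → k ≤ a.length →
      k ≤ b.length → a.take k = b.take k := by
    intro k a b hab ha hb
    rcases hab with h | h
    · exact (h.take k).eq_of_length (by simp [ha, hb])
    · exact ((h.take k).eq_of_length (by simp [ha, hb])).symm
  -- Lemma A: prefix constancy along stretches of long vertices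
  have lemA : ∀ (k i j : ℕ), i ≤ j → (∀ m, i ≤ m → m ≤ j → k ≤ (σ m).length) →
      (σ i).take k = (σ j).take k := by
    intro k i j hij
    induction j with
    | zero =>
      intro _
      have : i = 0 := Nat.le_zero.mp hij
      rw [this]
    | succ j ih =>
      intro hlen
      rcases Nat.lt_or_ge i (j+1) with h | h
      · have hij' : i ≤ j := Nat.lt_succ_iff.mp h
        have h1 : (σ i).take k = (σ j).take k :=
          ih hij' (fun m hm hm' => hlen m hm (Nat.le_succ_of_le hm'))
        have h2 : (σ j).take k = (σ (j+1)).take k :=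
          htake k _ _ (hcomp j) (hlen j hij' (Nat.le_succ _))
            (hlen (j+1) (le_trans hij' (Nat.le_succ _)) le_rfl)
        rw [h1, h2]
      · have : i = j + 1 := le_antisymm hij h
        rw [this]
  -- Lemma B: only finitely many vertices of each bounded length
  have lemB : ∀ k, {i | (σ i).length ≤ k}.Finite := by
    intro k
    induction k with
    | zero =>
      apply Set.Subsingleton.finite
      intro i hi j hj
      apply hinj
      have hi' : σ i = [] := List.length_eq_zero_iff.mp (Nat.le_zero.mp hi)
      have hj' : σ j = [] := List.length_eq_zero_iff.mp (Nat.le_zero.mp hj)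
      rw [hi', hj']
    | succ k ih =>
      obtain ⟨N, hN⟩ := ih.bddAbove
      have hlong : ∀ m, N + 1 ≤ m → k + 1 ≤ (σ m).length := by
        intro m hm
        by_contra h
        have : m ≤ N := hN (Nat.lt_succ_iff.mp (Nat.lt_of_not_le h))
        omega
      have hsub : {i | (σ i).length ≤ k + 1} ⊆
          Set.Iic N ∪ {i | N + 1 ≤ i ∧ (σ i).length ≤ k + 1} := by
        intro i hi
        rcases Nat.lt_or_ge N i with h | h
        · exact Or.inr ⟨h, hi⟩
        · exact Or.inl h
      apply Set.Finite.subset _ hsub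
      apply (Set.finite_Iic N).union
      apply Set.Subsingleton.finite
      intro i hi j hj
      -- wlog i ≤ j
      have key : ∀ a b : ℕ, a ≤ b → N + 1 ≤ a → (σ a).length ≤ k + 1 →
          N + 1 ≤ b → (σ b).length ≤ k + 1 → σ a = σ b := by
        intro a b hab ha1 ha2 hb1 hb2
        have h1 : (σ a).take (k+1) = (σ b).take (k+1) :=
          lemA (k+1) a b hab (fun m hm _ => hlong m (le_trans ha1 hm))
        have ha3 : (σ a).length = k + 1 := le_antisymm ha2 (hlong a ha1)
        have hb3 : (σ b).length = k + 1 := le_antisymm hb2 (hlong b hb1)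
        rw [← ha3, List.take_length, ha3, ← hb3, List.take_length] at h1
        exact h1
      rcases le_total i j with h | h
      · exact hinj (key i j h hi.1 hi.2 hj.1 hj.2)
      · exact (hinj (key j i h hj.1 hj.2 hi.1 hi.2)).symm
  -- For each n, a bound past which all vertices have length ≥ n
  have hNex : ∀ n : ℕ, ∃ N : ℕ, ∀ i, N ≤ i → n ≤ (σ i).length := by
    intro n
    obtain ⟨N, hN⟩ := (lemB n).bddAbove
    refine ⟨N + 1, fun i hi => ?_⟩
    by_contra h
    have : i ≤ N := hN (le_of_lt (Nat.lt_of_not_le h))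
    omega
  choose N hNp using hNex
  -- the stable prefix of length n
  set g : ℕ → List ℕ := fun n => (σ (N n)).take n with hg
  have hglen : ∀ n, (g n).length = n := by
    intro n
    simp [hg, List.length_take]
    exact hNp n (N n) le_rfl
  have hgstable : ∀ n i, N n ≤ i → g n = (σ i).take n := by
    intro n i hi
    exact lemA n (N n) i hi (fun m hm _ => hNp n m hm)
  have hgpref : ∀ n, g n <+: g (n + 1) := by
    intro n
    have h1 : g n = (σ (max (N n) (N (n+1)))).take n :=
      hgstable n _ (le_max_left _ _)
    have h2 : g (n+1) = (σ (max (N n) (N (n+1)))).take (n+1) :=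
      hgstable (n+1) _ (le_max_right _ _)
    rw [h1, h2]
    exact List.take_isPrefix_take.mpr (Or.inl (Nat.le_succ n))
  have hgmem : ∀ n, g n ∈ T := fun n => hT (σ (N n)) (hmem _) _ (List.take_prefix n _)
  refine ⟨fun n => (g (n + 1)).getD n 0, fun n => ?_⟩
  suffices h : (List.range n).map (fun n => (g (n + 1)).getD n 0) = g n by
    rw [h]; exact hgmem n
  induction n with
  | zero =>
    symm
    simpa using List.length_eq_zero_iff.mp (hglen 0)
  | succ n ih =>
    obtain ⟨t, ht⟩ := hgpref n
    have htl : t.length = 1 := by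
      have := hglen (n+1)
      rw [← ht] at this
      simp [hglen n] at this
      omega
    obtain ⟨a, ha⟩ := List.length_eq_one_iff.mp htl
    subst ha
    rw [List.range_succ, List.map_append, ih, List.map_singleton]
    rw [← ht]
    congr 1
    simp [List.getD_append_right, hglen n]
end

section
/- Let T be a tree over ℕ with no infinite branch, and let H be a simple graph with vertex set T in which every pair of distinct prefix-incomparable sequences is adjacent. Then every infinite subset S of the vertices of H contains an infinite set of pairwise adjacent vertices (an infinite clique of H). -/
/-- From a strictly increasing (under prefix) sequence of elements of a prefix-closed
set `T`, one can build an infinite branch of `T`. -/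
lemma exists_branch_of_chain (T : Set (List ℕ))
    (hT : ∀ σ ∈ T, ∀ τ : List ℕ, τ <+: σ → τ ∈ T)
    (c : ℕ → List ℕ) (hcT : ∀ n, c n ∈ T)
    (hc : ∀ n, c n <+: c (n + 1) ∧ c n ≠ c (n + 1)) :
    ∃ f : ℕ → ℕ, ∀ n : ℕ, (List.range n).map f ∈ T := by
  have hmono : ∀ m n, m ≤ n → c m <+: c n := by
    intro m n hmn
    induction n with
    | zero => simpa [Nat.le_zero.mp hmn] using List.prefix_refl _
    | succ n ih =>
      rcases Nat.lt_or_ge m (n + 1) with h | h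
      · exact ((ih (Nat.lt_succ_iff.mp h))).trans (hc n).1
      · have : m = n + 1 := le_antisymm hmn h
        simp [this]
  have hlen : ∀ n, n ≤ (c n).length := by
    intro n
    induction n with
    | zero => exact Nat.zero_le _
    | succ n ih =>
      have hlt : (c n).length < (c (n + 1)).length := by
        rcases (hc n).1 with ⟨t, ht⟩
        have htne : t ≠ [] := by
          intro h; exact (hc n).2 (by simp [h, ← ht])
        have : (c (n+1)).length = (c n).length + t.length := by
          rw [← ht]; simp
        have := List.length_pos_iff.mpr htne
        omega
      omega
  refine ⟨fun i => (c (i + 1)).getD i 0, fun n => ?_⟩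
  have key : (List.range n).map (fun i => (c (i + 1)).getD i 0) = (c n).take n := by
    apply List.ext_getElem
    · simp [Nat.min_eq_left (hlen n)]
    · intro i h1 h2
      simp only [List.getElem_map, List.getElem_range, List.getElem_take]
      have hi1 : i < (c (i + 1)).length := lt_of_lt_of_le (Nat.lt_succ_self i) (hlen (i + 1))
      have hin : i + 1 ≤ n := by
        simp only [List.length_map, List.length_range] at h1; omega
      have hpref : c (i + 1) <+: c n := hmono _ _ hin
      rw [List.getD_eq_getElem _ _ hi1, hpref.getElem hi1]
  rw [key]
  exact hT (c n) (hcT n) _ (List.take_prefix _ _)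

/-- If `T` is a tree with no infinite branch and `H` is a graph on `T` where every
pair of distinct incomparable sequences is adjacent, then every infinite subset of
`T` contains an infinite clique of `H`. -/
theorem stmt5 (T : Set (List ℕ))
    (hT : ∀ σ ∈ T, ∀ τ : List ℕ, τ <+: σ → τ ∈ T)
    (hWF : ¬ ∃ f : ℕ → ℕ, ∀ n : ℕ, (List.range n).map f ∈ T)
    (H : SimpleGraph (List ℕ))
    (hH : ∀ σ ∈ T, ∀ τ ∈ T, σ ≠ τ → ¬ σ <+: τ → ¬ τ <+: σ → H.Adj σ τ)
    (S : Set (List ℕ)) (hST : S ⊆ T) (hS : S.Infinite) :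
    ∃ C : Set (List ℕ), C ⊆ S ∧ C.Infinite ∧
      ∀ σ ∈ C, ∀ τ ∈ C, σ ≠ τ → H.Adj σ τ := by
  classical
  set B : Set (List ℕ) := {ν | ν ∈ T ∧ {σ ∈ S | ν <+: σ}.Infinite} with hBdef
  have hB0 : [] ∈ B := by
    obtain ⟨σ, hσ⟩ := hS.nonempty
    refine ⟨hT σ (hST hσ) [] List.nil_prefix, ?_⟩
    have : {σ ∈ S | [] <+: σ} = S := by ext x; simp [List.nil_prefix]
    rw [this]; exact hS
  -- find a maximal element of B
  have hmax : ∃ ν ∈ B, ∀ μ ∈ B, ν <+: μ → μ = ν := by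
    by_contra hcon
    push_neg at hcon
    have step : ∀ ν : {x // x ∈ B}, ∃ μ : {x // x ∈ B}, ν.1 <+: μ.1 ∧ ν.1 ≠ μ.1 := by
      intro ⟨ν, hν⟩
      obtain ⟨μ, hμB, hpre, hne⟩ := hcon ν hν
      exact ⟨⟨μ, hμB⟩, hpre, fun h => hne h.symm⟩
    choose g hg using step
    set c : ℕ → {x // x ∈ B} := fun n => g^[n] ⟨[], hB0⟩ with hcdef
    have hstep : ∀ n, (c n).1 <+: (c (n+1)).1 ∧ (c n).1 ≠ (c (n+1)).1 := by
      intro n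
      have : c (n + 1) = g (c n) := by
        simp [hcdef, Function.iterate_succ_apply']
      rw [this]; exact hg (c n)
    exact hWF (exists_branch_of_chain T hT (fun n => (c n).1)
      (fun n => (c n).2.1) hstep)
  obtain ⟨ν, ⟨hνT, hνInf⟩, hνmax⟩ := hmax
  -- each child of ν has only finitely many extensions in S
  have hchild : ∀ k : ℕ, {σ ∈ S | ν ++ [k] <+: σ}.Finite := by
    intro k
    by_contra hfin
    have hinf : {σ ∈ S | ν ++ [k] <+: σ}.Infinite := hfin
    obtain ⟨σ, hσS, hσpre⟩ := hinf.nonempty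
    have hμT : ν ++ [k] ∈ T := hT σ (hST hσS) _ hσpre
    have : ν ++ [k] = ν := hνmax (ν ++ [k]) ⟨hμT, hinf⟩ (by exact ⟨[k], rfl⟩)
    simpa using congrArg List.length this
  -- set of used children
  set K : Set ℕ := {k | {σ ∈ S | ν ++ [k] <+: σ}.Nonempty} with hKdef
  have hstepdown : ∀ σ ∈ S, ν <+: σ → σ ≠ ν → ∃ k, ν ++ [k] <+: σ := by
    intro σ _ hpre hne
    obtain ⟨t, ht⟩ := hpre
    match t with
    | [] => exact absurd (by simp [← ht]) hne
    | a :: t' => exact ⟨a, ⟨t', by simp [← ht]⟩⟩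
  have hK : K.Infinite := by
    by_contra hKfin
    rw [Set.not_infinite] at hKfin
    have hsub : {σ ∈ S | ν <+: σ} ⊆ {ν} ∪ ⋃ k ∈ K, {σ ∈ S | ν ++ [k] <+: σ} := by
      rintro σ ⟨hσS, hσpre⟩
      by_cases hne : σ = ν
      · exact Or.inl hne
      · obtain ⟨k, hk⟩ := hstepdown σ hσS hσpre hne
        exact Or.inr (Set.mem_biUnion ⟨σ, hσS, hk⟩ ⟨hσS, hk⟩)
    exact hνInf (((Set.finite_singleton ν).union
      (hKfin.biUnion (fun k _ => hchild k))).subset hsub)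
  -- choose a witness for each used child
  have hch : ∀ k ∈ K, ∃ σ, σ ∈ S ∧ ν ++ [k] <+: σ := fun k hk => hk
  choose! F hF1 hF2 using hch
  -- incomparability of witnesses through distinct children
  have hkey : ∀ k ∈ K, ∀ j ∈ K, F k <+: F j → k = j := by
    intro k hk j hj hpre
    have h1 : ν ++ [k] <+: F j := (hF2 k hk).trans hpre
    have h2 : ν ++ [j] <+: F j := hF2 j hj
    have : ν ++ [k] = ν ++ [j] :=
      List.IsPrefix.eq_of_length
        (List.prefix_of_prefix_length_le h1 h2 (by simp)) (by simp)
    simpa using this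
  have hinjF : Set.InjOn F K := by
    intro k hk j hj h
    exact hkey k hk j hj (h ▸ List.prefix_refl _)
  refine ⟨F '' K, ?_, hK.image hinjF, ?_⟩
  · rintro σ ⟨k, hk, rfl⟩; exact hF1 k hk
  · rintro σ ⟨k, hk, rfl⟩ τ ⟨j, hj, rfl⟩ hne
    have hkj : k ≠ j := fun h => hne (h ▸ rfl)
    exact hH _ (hST (hF1 k hk)) _ (hST (hF1 j hj)) hne
      (fun h => hkj (hkey k hk j hj h))
      (fun h => hkj (hkey j hj k hk h).symm)
end

section
/- For every countable simple graph H, the disjoint union of countably infinitely many infinite stars embeds into H as a subgraph if and only if H has infinitely many vertices of infinite degree. -/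
/-! The stars are embedded greedily. Enumerate their vertices so that every centre comes before
its leaves and place them one at a time: a centre at an unused vertex of infinite degree, a leaf at
an unused neighbour of the image of its centre. Only finitely many vertices are used before each
step, so the infinite set to choose from always has a free element. Conversely, the images of the
centres are infinitely many vertices of infinite degree. -/

/-- The disjoint union of countably many infinite stars: the `i`-th star has
center `(i, none)` and leaves `(i, some j)`. -/
def infiniteStars : SimpleGraph (ℕ × Option ℕ) where
  Adj a b := a.1 = b.1 ∧ a.2 ≠ b.2 ∧ (a.2 = none ∨ b.2 = none)
  symm := by
    constructor
    intro a b ⟨h1, h2, h3⟩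
    exact ⟨h1.symm, h2.symm, h3.symm⟩
  loopless := by
    constructor
    intro a ⟨_, h2, _⟩
    exact h2 rfl

namespace Function

variable {α : Type*} [Nonempty α]

noncomputable def greedySeq (A : ℕ → (ℕ → α) → Set α) (n : ℕ) : α :=
  let prev : ℕ → α := fun m => if m < n then greedySeq A m else Classical.arbitrary α
  Classical.epsilon (· ∈ A n prev \ prev '' Set.Iio n)

theorem greedySeq_mem (A : ℕ → (ℕ → α) → Set α)
    (hloc : ∀ n g g', (∀ m < n, g m = g' m) → A n g = A n g')
    (hinf : ∀ n g, (∀ m < n, g m ∈ A m g) → (A n g).Infinite) (n : ℕ) :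
    greedySeq A n ∈ A n (greedySeq A) \ greedySeq A '' Set.Iio n := by
  induction n using Nat.strong_induction_on with
  | _ n ih =>
    set prev : ℕ → α := fun m => if m < n then greedySeq A m else Classical.arbitrary α
    have hprev : ∀ m < n, prev m = greedySeq A m := fun m hm => if_pos hm
    have hA : A n prev = A n (greedySeq A) := hloc n _ _ hprev
    have himage : prev '' Set.Iio n = greedySeq A '' Set.Iio n :=
      Set.image_congr fun m hm => hprev m hm
    have hne : (A n (greedySeq A) \ greedySeq A '' Set.Iio n).Nonempty :=
      ((hinf n _ fun m hm => (ih m hm).1).sdiff ((Set.finite_Iio n).image _)).nonempty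
    rw [greedySeq, hA, himage]
    exact Classical.epsilon_spec hne

theorem greedySeq_injective (A : ℕ → (ℕ → α) → Set α)
    (hloc : ∀ n g g', (∀ m < n, g m = g' m) → A n g = A n g')
    (hinf : ∀ n g, (∀ m < n, g m ∈ A m g) → (A n g).Infinite) :
    Injective (greedySeq A) :=
  Injective.of_lt_imp_ne fun m n hmn heq =>
    (greedySeq_mem A hloc hinf n).2 ⟨m, hmn, heq⟩

end Function

namespace SimpleGraph

open Function Nat Encodable

variable {V : Type*} (H : SimpleGraph V)

theorem infinite_setOf_infinite_neighborSet_of_stars {f : ℕ × Option ℕ → V} (hf : Injective f)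
    (hadj : ∀ a b, infiniteStars.Adj a b → H.Adj (f a) (f b)) :
    {v | (H.neighborSet v).Infinite}.Infinite := by
  refine Set.infinite_of_injective_forall_mem (f := fun i => f (i, none))
    (fun i k hik => by simpa using hf hik) fun i => ?_
  refine Set.infinite_of_injective_forall_mem (f := fun j => f (i, some j))
    (fun j k hjk => by simpa using hf hjk) fun j => ?_
  exact hadj _ _ ⟨rfl, by simp, Or.inl rfl⟩

theorem exists_stars_embedding (hS : {v | (H.neighborSet v).Infinite}.Infinite) :
    ∃ f : ℕ × Option ℕ → V, Injective f ∧
      ∀ a b, infiniteStars.Adj a b → H.Adj (f a) (f b) := by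
  have : Nonempty V := ⟨hS.nonempty.some⟩
  -- The star vertex `(i, o)` is placed at step `pair i (encode o)`, after its centre `pair i 0`.
  let A : ℕ → (ℕ → V) → Set V := fun n g =>
    if (unpair n).2 = 0 then {v | (H.neighborSet v).Infinite}
    else H.neighborSet (g (pair (unpair n).1 0))
  have centre_lt {n : ℕ} (hn : (unpair n).2 ≠ 0) : pair (unpair n).1 0 < n := by
    simpa [pair_unpair] using pair_lt_pair_right (unpair n).1 (pos_of_ne_zero hn)
  have hloc : ∀ n g g', (∀ m < n, g m = g' m) → A n g = A n g' := by
    intro n g g' hgg'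
    simp only [A]
    split_ifs with hn
    · rfl
    · rw [hgg' _ (centre_lt hn)]
  have hinf : ∀ n g, (∀ m < n, g m ∈ A m g) → (A n g).Infinite := by
    intro n g hg
    simp only [A]
    split_ifs with hn
    · exact hS
    · simpa [A, unpair_pair] using hg _ (centre_lt hn)
  set f : ℕ × Option ℕ → V := fun p => greedySeq A (pair p.1 (encode p.2))
  have leaf_adj (i j : ℕ) : H.Adj (f (i, none)) (f (i, some j)) := by
    simpa [A, f, unpair_pair] using (greedySeq_mem A hloc hinf (pair i (j + 1))).1
  refine ⟨f, (greedySeq_injective A hloc hinf).comp fun p q hpq => ?_, ?_⟩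
  · obtain ⟨h1, h2⟩ := pair_eq_pair.1 hpq
    exact Prod.ext h1 (encode_injective h2)
  · rintro ⟨i, o⟩ ⟨k, o'⟩ ⟨rfl, hne, hnone⟩
    match o, o' with
    | none, none => exact absurd rfl hne
    | none, some j => exact leaf_adj i j
    | some j, none => exact (leaf_adj i j).symm
    | some _, some _ => simp at hnone

end SimpleGraph

theorem stmt10_general {V : Type*} (H : SimpleGraph V) :
    (∃ f : ℕ × Option ℕ → V, Function.Injective f ∧
      ∀ a b : ℕ × Option ℕ, infiniteStars.Adj a b → H.Adj (f a) (f b)) ↔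
    {v : V | (H.neighborSet v).Infinite}.Infinite :=
  ⟨fun ⟨_, hf, hadj⟩ => H.infinite_setOf_infinite_neighborSet_of_stars hf hadj,
    H.exists_stars_embedding⟩

/-- The disjoint union of countably infinitely many infinite stars embeds into a
countable graph `H` as a subgraph iff `H` has infinitely many vertices of infinite
degree. -/
theorem stmt10 {V : Type*} [Countable V] (H : SimpleGraph V) :
    (∃ f : ℕ × Option ℕ → V, Function.Injective f ∧
      ∀ a b : ℕ × Option ℕ, infiniteStars.Adj a b → H.Adj (f a) (f b)) ↔
    {v : V | (H.neighborSet v).Infinite}.Infinite :=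
  stmt10_general H
end

section
/- Let G be a simple graph with infinite vertex set V(G) ⊆ ℕ such that every vertex has finite degree and G is promptly connected (for every n, the induced subgraph on V(G) ∩ {0,…,n} is connected). Then G contains a one-way infinite ray whose vertices are strictly increasing: there exist vertices w_0 < w_1 < w_2 < … with w_i adjacent to w_{i+1} for all i. -/
/-- A promptly connected, infinite, locally finite graph with vertices in `ℕ`
contains a one-way infinite ray with strictly increasing vertices. -/
theorem stmt13 (V : Set ℕ) (G : SimpleGraph ℕ)
    (hVinf : V.Infinite)
    (hVE : ∀ a b : ℕ, G.Adj a b → a ∈ V ∧ b ∈ V)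
    (hdeg : ∀ v ∈ V, (G.neighborSet v).Finite)
    (hpc : ∀ n : ℕ, (G.induce (V ∩ Set.Iic n)).Preconnected) :
    ∃ w : ℕ → ℕ, (∀ i : ℕ, w i ∈ V) ∧ StrictMono w ∧
      ∀ i : ℕ, G.Adj (w i) (w (i + 1)) := by
  classical
  set R : ℕ → ℕ → Prop := fun a b => G.Adj a b ∧ a < b with hRdef
  set m : ℕ := sInf V with hmdef
  have hmV : m ∈ V := Nat.sInf_mem hVinf.nonempty
  -- helper: reachable distinct vertices give a neighbor
  have nbr : ∀ {α : Type} (H : SimpleGraph α) (a b : α), a ≠ b → H.Reachable a b →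
      ∃ c, H.Adj a c := by
    rintro α H a b hab ⟨p⟩
    cases p with
    | nil => exact absurd rfl hab
    | cons h q => exact ⟨_, h⟩
  -- every vertex of V is reachable from m by a strictly increasing path
  have key : ∀ n, n ∈ V → Relation.ReflTransGen R m n := by
    intro n
    induction n using Nat.strong_induction_on with
    | _ n ih =>
      intro hn
      rcases eq_or_lt_of_le (Nat.sInf_le hn) with h | h
      · rw [← hmdef] at h; rw [← h]
      · have hne : (⟨n, hn, le_refl n⟩ : ↥(V ∩ Set.Iic n)) ≠ ⟨m, hmV, h.le⟩ := by
          intro hEq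
          exact absurd (congrArg Subtype.val hEq) h.ne'
        obtain ⟨c, hc⟩ := nbr (G.induce (V ∩ Set.Iic n)) _ _ hne
          (hpc n ⟨n, hn, le_refl n⟩ ⟨m, hmV, h.le⟩)
        have hadj : G.Adj n c.val := hc
        have hcV : c.val ∈ V := c.2.1
        have hlt : c.val < n := lt_of_le_of_ne c.2.2 (G.ne_of_adj hadj.symm)
        exact (ih c.val hlt hcV).tail ⟨hadj.symm, hlt⟩
  -- stepping lemma
  have step : ∀ v, v ∈ V → {n | Relation.ReflTransGen R v n}.Infinite →
      ∃ u, R v u ∧ u ∈ V ∧ {n | Relation.ReflTransGen R u n}.Infinite := by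
    intro v hv hinf
    by_contra hcon
    push_neg at hcon
    have hfin : ({v} ∪ ⋃ u ∈ {u | R v u}, {n | Relation.ReflTransGen R u n}).Finite := by
      apply Set.Finite.union (Set.finite_singleton v)
      apply Set.Finite.biUnion ((hdeg v hv).subset ?_)
      · intro u hu
        exact hcon u hu (hVE v u hu.1).2
      · intro u hu
        exact hu.1
    refine hinf (hfin.subset ?_)
    intro n hn
    rcases Relation.ReflTransGen.cases_head hn with h | ⟨u, hvu, hun⟩
    · exact Or.inl (by simp [← h])
    · exact Or.inr (Set.mem_biUnion hvu hun)
  -- Good vertices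
  have hGoodm : m ∈ V ∧ {n | Relation.ReflTransGen R m n}.Infinite :=
    ⟨hmV, hVinf.mono (fun n hn => key n hn)⟩
  have hstep : ∀ v, (v ∈ V ∧ {n | Relation.ReflTransGen R v n}.Infinite) →
      ∃ u, R v u ∧ (u ∈ V ∧ {n | Relation.ReflTransGen R u n}.Infinite) := by
    intro v hv
    obtain ⟨u, h1, h2, h3⟩ := step v hv.1 hv.2
    exact ⟨u, h1, h2, h3⟩
  choose! next hnext1 hnext2 using hstep
  let f : ℕ → ℕ := fun i => next^[i] m
  have hGood : ∀ i, (f i ∈ V ∧ {n | Relation.ReflTransGen R (f i) n}.Infinite) := by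
    intro i
    induction i with
    | zero => exact hGoodm
    | succ i ihh =>
      have : f (i + 1) = next (f i) := Function.iterate_succ_apply' next i m
      rw [this]
      exact hnext2 (f i) ihh
  have hR : ∀ i, R (f i) (f (i + 1)) := by
    intro i
    have : f (i + 1) = next (f i) := Function.iterate_succ_apply' next i m
    rw [this]
    exact hnext1 (f i) (hGood i)
  refine ⟨f, fun i => (hGood i).1, strictMono_nat_of_lt_succ (fun i => (hR i).2),
    fun i => (hR i).1⟩
end
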